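/- Assume the system is q-eigenvalue observable with s ≤ q ≤ 2s, and the data Y_1,…,Y_p are generated under at most s attacks from some x_true. Let Λ ⊆ {1,…,r} and define X_Λ = { Σ_{j∈Λ} x_j : x_j ∈ X_j for each j ∈ Λ, and |∪_{j∈Λ} I_j(x_j)| ≤ s }. Then X_Λ and each X_j are nonempty finite sets, and for every row vector κ ∈ ℝ^{1×n} and every plausible state x: κ x ≤ Σ_{j∉Λ} max_{x_j ∈ X_j} κ x_j + max_{x_Λ ∈ X_Λ} κ x_Λ ≤ Σ_{j=1}^r max_{x_j ∈ X_j} κ x_j. (Proposition 3: the partial-combination bound M̄_Λ satisfies M̄ ≥ M̄_Λ ≥ M(Y).) -/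

import Mathlib

open Matrix

noncomputable section

/-- Generalized eigenspace of `A` for the eigenvalue `μ`: `ker((A - μ I)^n)`. -/
def genEig {n : ℕ} (A : Matrix (Fin n) (Fin n) ℝ) (μ : ℝ) : Set (Fin n → ℝ) :=
  {x | ((A - μ • 1) ^ n).mulVec x = 0}

/-- Observability map of sensor `i` over horizon `t`: `(𝒪_i x)_τ = C_i A^τ x`. -/
def obsMap {n p : ℕ} (t : ℕ) (A : Matrix (Fin n) (Fin n) ℝ)
    (C : Matrix (Fin p) (Fin n) ℝ) (i : Fin p) (x : Fin n → ℝ) : Fin (t + 1) → ℝ :=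
  fun τ => ((C * A ^ (τ : ℕ)).mulVec x) i

/-- `x` is a plausible state for the data `Y`: some set `Γ` of `p - s` sensors is
exactly explained by `x`. -/
def plausible {n p : ℕ} (t : ℕ) (A : Matrix (Fin n) (Fin n) ℝ)
    (C : Matrix (Fin p) (Fin n) ℝ) (s : ℕ) (Y : Fin p → Fin (t + 1) → ℝ)
    (x : Fin n → ℝ) : Prop :=
  ∃ Γ : Finset (Fin p), Γ.card = p - s ∧ ∀ i ∈ Γ, obsMap t A C i x = Y i

/-- The eigenvalue `μ` of `A` is observable with respect to sensor `i` (over `ℂ`). -/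
def eigObs {n p : ℕ} (A : Matrix (Fin n) (Fin n) ℝ)
    (C : Matrix (Fin p) (Fin n) ℝ) (μ : ℝ) (i : Fin p) : Prop :=
  ∀ v : Fin n → ℂ, (A.map Complex.ofReal).mulVec v = (μ : ℂ) • v →
    ((C.map Complex.ofReal).mulVec v) i = 0 → v = 0

/-- The substate `xj ∈ V^j` agrees with sensor `i`: some choice of substates in the
other generalized eigenspaces makes the total response match the data `Y i`. -/
def agrees {n p r : ℕ} (t : ℕ) (A : Matrix (Fin n) (Fin n) ℝ)
    (C : Matrix (Fin p) (Fin n) ℝ) (lam : Fin r → ℝ)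
    (Y : Fin p → Fin (t + 1) → ℝ) (j : Fin r) (xj : Fin n → ℝ) (i : Fin p) : Prop :=
  ∃ z : Fin r → Fin n → ℝ, (∀ k, k ≠ j → z k ∈ genEig A (lam k)) ∧
    obsMap t A C i (xj + ∑ k ∈ Finset.univ.erase j, z k) = Y i

/-- `X_j`: the substates in `V^j` that agree with at least `q + 1 - s` sensors for
which `λ_j` is observable. -/
def Xset {n p r : ℕ} (t : ℕ) (A : Matrix (Fin n) (Fin n) ℝ)
    (C : Matrix (Fin p) (Fin n) ℝ) (lam : Fin r → ℝ)
    (Y : Fin p → Fin (t + 1) → ℝ) (s q : ℕ) (j : Fin r) : Set (Fin n → ℝ) :=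
  {xj | xj ∈ genEig A (lam j) ∧
    q + 1 - s ≤ {i : Fin p | eigObs A C (lam j) i ∧ agrees t A C lam Y j xj i}.ncard}

/-- `I_j(xj)`: the sensors that do not agree with the substate `xj`. -/
def Iset {n p r : ℕ} (t : ℕ) (A : Matrix (Fin n) (Fin n) ℝ)
    (C : Matrix (Fin p) (Fin n) ℝ) (lam : Fin r → ℝ)
    (Y : Fin p → Fin (t + 1) → ℝ) (j : Fin r) (xj : Fin n → ℝ) : Set (Fin p) :=
  {i | ¬ agrees t A C lam Y j xj i}

/-- `X_Λ`: sums over `j ∈ Λ` of substates `x_j ∈ X_j` whose disagreeing sensor sets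
jointly have cardinality at most `s`. -/
def XLam {n p r : ℕ} (t : ℕ) (A : Matrix (Fin n) (Fin n) ℝ)
    (C : Matrix (Fin p) (Fin n) ℝ) (lam : Fin r → ℝ)
    (Y : Fin p → Fin (t + 1) → ℝ) (s q : ℕ) (L : Finset (Fin r)) : Set (Fin n → ℝ) :=
  {xL | ∃ v : Fin r → Fin n → ℝ, (∀ j ∈ L, v j ∈ Xset t A C lam Y s q j) ∧
    (⋃ j ∈ L, Iset t A C lam Y j (v j)).ncard ≤ s ∧ xL = ∑ j ∈ L, v j}


/-! A substate in `V^j` that agrees with a sensor `i` observing `λ_j` is unique: the difference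
of two candidates, completed by components in the other `V^k`, is invisible to sensor `i` over
`t + 1 ≥ n` steps, hence (Cayley–Hamilton) under every polynomial in `A`; a Chinese-remainder
polynomial in `A` isolates its `V^j`-component, which is then an unobservable vector of
`ker (A - λ_j)^n`, so zero. Since `X_j` asks for `q + 1 - s ≥ 1` such sensors, `X_j` is finite,
and so is `X_Λ`. A state fitting every sensor outside a set of at most `s` sensors (`x_true`, or a
plausible state) fits at least `q + 1 - s` sensors observing `λ_j`, so its projections lie in the
`X_j` and their partial sum over `Λ` in `X_Λ`; this gives nonemptiness and the lower bound, and
the upper bound holds termwise. -/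

open Polynomial

namespace Matrix

variable {ι R : Type*} [Fintype ι] [DecidableEq ι]

theorem exists_pow_mulVec_ne_zero_and_mulVec_eq_zero [Semiring R] {N : Matrix ι ι R}
    {w : ι → R} (hw : w ≠ 0) {k : ℕ} (hk : N ^ k *ᵥ w = 0) :
    ∃ m, N ^ m *ᵥ w ≠ 0 ∧ N *ᵥ (N ^ m *ᵥ w) = 0 := by
  induction k with
  | zero => exact absurd (by simpa using hk) hw
  | succ k ih =>
    by_cases h : N ^ k *ᵥ w = 0
    · exact ih h
    · exact ⟨k, h, by rwa [mulVec_mulVec, ← pow_succ']⟩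

theorem aeval_mulVec_mem_of_forall_pow_mulVec_mem [CommRing R] [Nontrivial R]
    {M : Matrix ι ι R} {w : ι → R} {K : Submodule R (ι → R)}
    (h : ∀ k < Fintype.card ι, M ^ k *ᵥ w ∈ K) (f : R[X]) : aeval M f *ᵥ w ∈ K := by
  rcases isEmpty_or_nonempty ι with hι | hι
  · rw [Subsingleton.elim (aeval M f *ᵥ w) 0]
    exact K.zero_mem
  have hdeg : (f %ₘ M.charpoly).natDegree < Fintype.card ι := by
    rw [← M.charpoly_natDegree_eq_dim]
    refine natDegree_modByMonic_lt f M.charpoly_monic fun h1 => ?_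
    exact Fintype.card_ne_zero (α := ι) (by simpa [h1] using M.charpoly_natDegree_eq_dim.symm)
  rw [aeval_eq_aeval_mod_charpoly, aeval_eq_sum_range' hdeg, sum_mulVec]
  refine K.sum_mem fun k hk => ?_
  rw [smul_mulVec]
  exact K.smul_mem _ (h k (Finset.mem_range.mp hk))

theorem aeval_X_sub_C_pow [CommRing R] (M : Matrix ι ι R) (μ : R) (m : ℕ) :
    aeval M ((X - Polynomial.C μ) ^ m) = (M - μ • 1) ^ m := by
  rw [map_pow, map_sub, aeval_X, aeval_C, Algebra.algebraMap_eq_smul_one]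

end Matrix

theorem Set.Finite.le_csSup_image {α β : Type*} [ConditionallyCompleteLattice β] {S : Set α}
    (hS : S.Finite) (f : α → β) {x : α} (hx : x ∈ S) : f x ≤ sSup (f '' S) :=
  have : Nonempty β := ⟨f x⟩
  le_csSup (hS.image f).bddAbove (Set.mem_image_of_mem f hx)

section

variable {n p r t : ℕ} {A : Matrix (Fin n) (Fin n) ℝ} {C : Matrix (Fin p) (Fin n) ℝ}
  {lam : Fin r → ℝ} {Y : Fin p → Fin (t + 1) → ℝ}

theorem genEig_sub {μ : ℝ} {x y : Fin n → ℝ} (hx : x ∈ genEig A μ) (hy : y ∈ genEig A μ) :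
    x - y ∈ genEig A μ := by
  change ((A - μ • 1) ^ n) *ᵥ (x - y) = 0
  rw [mulVec_sub, hx, hy, sub_zero]

theorem aeval_mulVec_eq_zero_of_mem_genEig {μ : ℝ} {u : Fin n → ℝ} (hu : u ∈ genEig A μ)
    {f : ℝ[X]} (hf : (X - Polynomial.C μ) ^ n ∣ f) : aeval A f *ᵥ u = 0 := by
  obtain ⟨g, rfl⟩ := hf
  rw [mul_comm, map_mul, ← mulVec_mulVec, aeval_X_sub_C_pow,
    show ((A - μ • 1) ^ n) *ᵥ u = 0 from hu, mulVec_zero]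

theorem exists_aeval_mulVec_sum_eq (hlam : Function.Injective lam) (j : Fin r) :
    ∃ f : ℝ[X], ∀ u : Fin r → Fin n → ℝ, (∀ k, u k ∈ genEig A (lam k)) →
      aeval A f *ᵥ ∑ k, u k = u j := by
  obtain ⟨a, b, hab⟩ : IsCoprime (∏ k ∈ Finset.univ.erase j, (X - Polynomial.C (lam k)) ^ n)
      ((X - Polynomial.C (lam j)) ^ n) :=
    IsCoprime.prod_left fun k hk =>
      (pairwise_coprime_X_sub_C hlam (Finset.mem_erase.mp hk).1).pow
  refine ⟨a * ∏ k ∈ Finset.univ.erase j, (X - Polynomial.C (lam k)) ^ n, fun u hu => ?_⟩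
  rw [mulVec_sum, Finset.sum_eq_single j]
  · have hj : aeval A (b * (X - Polynomial.C (lam j)) ^ n) *ᵥ u j = 0 :=
      aeval_mulVec_eq_zero_of_mem_genEig (hu j) (dvd_mul_left _ _)
    rwa [eq_sub_of_add_eq' hab, map_sub, map_one, sub_mulVec, one_mulVec, sub_eq_zero,
      eq_comm] at hj
  · intro k _ hk
    exact aeval_mulVec_eq_zero_of_mem_genEig (hu k)
      ((Finset.dvd_prod_of_mem _ (Finset.mem_erase.mpr ⟨hk, Finset.mem_univ k⟩)).mul_left a)
  · exact fun h => absurd (Finset.mem_univ j) h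

theorem eigObs.eq_zero_of_mulVec_eq_smul {μ : ℝ} {i : Fin p} (hobs : eigObs A C μ i)
    {v : Fin n → ℝ} (hAv : A *ᵥ v = μ • v) (hCv : (C *ᵥ v) i = 0) : v = 0 := by
  have hv := hobs (Complex.ofRealHom ∘ v) (funext fun k => ?_) ?_
  · exact funext fun k => by simpa using congrFun hv k
  · exact (RingHom.map_mulVec Complex.ofRealHom A v k).symm.trans (by simp [hAv])
  · exact (RingHom.map_mulVec Complex.ofRealHom C v i).symm.trans (by simp [hCv])

theorem eigObs.eq_zero_of_forall_aeval {μ : ℝ} {i : Fin p} (hobs : eigObs A C μ i)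
    {w : Fin n → ℝ} (hw : w ∈ genEig A μ) (h : ∀ g : ℝ[X], (C *ᵥ (aeval A g *ᵥ w)) i = 0) :
    w = 0 := by
  by_contra hw0
  obtain ⟨m, hm, hker⟩ := exists_pow_mulVec_ne_zero_and_mulVec_eq_zero hw0 hw
  refine hm (hobs.eq_zero_of_mulVec_eq_smul ?_ ?_)
  · rwa [sub_mulVec, smul_mulVec, one_mulVec, sub_eq_zero] at hker
  · have hm := h ((X - Polynomial.C μ) ^ m)
    rwa [aeval_X_sub_C_pow] at hm

theorem obsMap_apply (i : Fin p) (x : Fin n → ℝ) (τ : Fin (t + 1)) :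
    obsMap t A C i x τ = (C *ᵥ (A ^ (τ : ℕ) *ᵥ x)) i := by
  rw [obsMap, mulVec_mulVec]

theorem obsMap_sub (i : Fin p) (x y : Fin n → ℝ) :
    obsMap t A C i (x - y) = obsMap t A C i x - obsMap t A C i y :=
  funext fun τ => by simp [obsMap, mulVec_sub]

theorem eq_zero_of_obsMap_sum_eq_zero (ht : n - 1 ≤ t) (hlam : Function.Injective lam)
    {j : Fin r} {i : Fin p} (hobs : eigObs A C (lam j) i) {u : Fin r → Fin n → ℝ}
    (hu : ∀ k, u k ∈ genEig A (lam k)) (h : obsMap t A C i (∑ k, u k) = 0) : u j = 0 := by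
  obtain ⟨f, hf⟩ := exists_aeval_mulVec_sum_eq (A := A) hlam j
  let K : Submodule ℝ (Fin n → ℝ) := LinearMap.ker ((LinearMap.proj i).comp C.mulVecLin)
  have hK : ∀ g : ℝ[X], aeval A g *ᵥ ∑ k, u k ∈ K :=
    aeval_mulVec_mem_of_forall_pow_mulVec_mem fun k hk => by
      simpa [K, obsMap_apply] using congrFun h ⟨k, by rw [Fintype.card_fin] at hk; omega⟩
  refine hobs.eq_zero_of_forall_aeval (hu j) fun g => ?_
  rw [← hf u hu, mulVec_mulVec _ (aeval A g), ← map_mul]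
  exact hK (g * f)

theorem agrees.exists_sum_eq {j : Fin r} {i : Fin p} {xj : Fin n → ℝ}
    (hx : xj ∈ genEig A (lam j)) (h : agrees t A C lam Y j xj i) :
    ∃ z : Fin r → Fin n → ℝ, (∀ k, z k ∈ genEig A (lam k)) ∧ z j = xj ∧
      obsMap t A C i (∑ k, z k) = Y i := by
  obtain ⟨z, hz, hzY⟩ := h
  refine ⟨Function.update z j xj, fun k => ?_, Function.update_self .., ?_⟩
  · rcases eq_or_ne k j with rfl | hk
    · simpa using hx
    · simpa [hk] using hz k hk
  · rwa [Finset.sum_update_of_mem (Finset.mem_univ j), Finset.sdiff_singleton_eq_erase]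

theorem agrees_unique (ht : n - 1 ≤ t) (hlam : Function.Injective lam) {j : Fin r} {i : Fin p}
    (hobs : eigObs A C (lam j) i) {xj xj' : Fin n → ℝ} (hx : xj ∈ genEig A (lam j))
    (hx' : xj' ∈ genEig A (lam j)) (h : agrees t A C lam Y j xj i)
    (h' : agrees t A C lam Y j xj' i) : xj = xj' := by
  obtain ⟨z, hz, rfl, hzY⟩ := h.exists_sum_eq hx
  obtain ⟨z', hz', rfl, hzY'⟩ := h'.exists_sum_eq hx'
  have hdiff : z j - z' j = 0 :=
    eq_zero_of_obsMap_sum_eq_zero ht hlam hobs (u := fun k => z k - z' k)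
      (fun k => genEig_sub (hz k) (hz' k))
      (by rw [Finset.sum_sub_distrib, obsMap_sub, hzY, hzY', sub_self])
  exact sub_eq_zero.mp hdiff

end

section

variable {n p r s q t : ℕ} {A : Matrix (Fin n) (Fin n) ℝ} {C : Matrix (Fin p) (Fin n) ℝ}
  {lam : Fin r → ℝ} {Y : Fin p → Fin (t + 1) → ℝ} {P : Fin r → Matrix (Fin n) (Fin n) ℝ}

theorem agrees_proj (hPmem : ∀ j x, P j *ᵥ x ∈ genEig A (lam j)) (hPsum : ∀ x, ∑ j, P j *ᵥ x = x)
    {i : Fin p} {x : Fin n → ℝ} (hfit : obsMap t A C i x = Y i) (j : Fin r) :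
    agrees t A C lam Y j (P j *ᵥ x) i :=
  ⟨fun k => P k *ᵥ x, fun k _ => hPmem k x,
    by rwa [Finset.add_sum_erase _ (fun k => P k *ᵥ x) (Finset.mem_univ j), hPsum]⟩

theorem proj_mem_Xset (hPmem : ∀ j x, P j *ᵥ x ∈ genEig A (lam j))
    (hPsum : ∀ x, ∑ j, P j *ᵥ x = x) {j : Fin r}
    (hqobs : q + 1 ≤ {i : Fin p | eigObs A C (lam j) i}.ncard) {S : Finset (Fin p)}
    (hS : S.card ≤ s) {x : Fin n → ℝ} (hfit : ∀ i ∉ S, obsMap t A C i x = Y i) :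
    P j *ᵥ x ∈ Xset t A C lam Y s q j := by
  refine ⟨hPmem j x, ?_⟩
  calc q + 1 - s ≤ {i : Fin p | eigObs A C (lam j) i}.ncard - (S : Set (Fin p)).ncard := by
        rw [Set.ncard_coe_finset]; omega
    _ ≤ ({i : Fin p | eigObs A C (lam j) i} \ S).ncard := Set.le_ncard_sdiff _ _
    _ ≤ {i | eigObs A C (lam j) i ∧ agrees t A C lam Y j (P j *ᵥ x) i}.ncard :=
      Set.ncard_le_ncard fun i hi => ⟨hi.1, agrees_proj hPmem hPsum (hfit i hi.2) j⟩

theorem sum_proj_mem_XLam (hPmem : ∀ j x, P j *ᵥ x ∈ genEig A (lam j))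
    (hPsum : ∀ x, ∑ j, P j *ᵥ x = x) (hqobs : ∀ j, q + 1 ≤ {i : Fin p | eigObs A C (lam j) i}.ncard)
    {S : Finset (Fin p)} (hS : S.card ≤ s) {x : Fin n → ℝ}
    (hfit : ∀ i ∉ S, obsMap t A C i x = Y i) (L : Finset (Fin r)) :
    ∑ j ∈ L, P j *ᵥ x ∈ XLam t A C lam Y s q L := by
  refine ⟨fun j => P j *ᵥ x, fun j _ => proj_mem_Xset hPmem hPsum (hqobs j) hS hfit, ?_, rfl⟩
  have hsub : (⋃ j ∈ L, Iset t A C lam Y j (P j *ᵥ x)) ⊆ S := by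
    simp only [Set.iUnion_subset_iff]
    intro j _ i hi
    by_contra hiS
    exact hi (agrees_proj hPmem hPsum (hfit i hiS) j)
  calc _ ≤ (S : Set (Fin p)).ncard := Set.ncard_le_ncard hsub
    _ ≤ s := by rwa [Set.ncard_coe_finset]

theorem Xset_finite (ht : n - 1 ≤ t) (hlam : Function.Injective lam) (hsq : s ≤ q) (j : Fin r) :
    (Xset t A C lam Y s q j).Finite := by
  have hsub : Xset t A C lam Y s q j ⊆ ⋃ i : Fin p,
      {xj | xj ∈ genEig A (lam j) ∧ eigObs A C (lam j) i ∧ agrees t A C lam Y j xj i} := by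
    rintro xj ⟨hgen, hcard⟩
    obtain ⟨i, hobs, hagree⟩ := Set.nonempty_of_ncard_ne_zero
      (hcard.trans_lt' (by omega)).ne'
    exact Set.mem_iUnion.mpr ⟨i, hgen, hobs, hagree⟩
  refine (Set.finite_iUnion fun i => Set.Subsingleton.finite ?_).subset hsub
  rintro x ⟨hx, hobs, h⟩ x' ⟨hx', -, h'⟩
  exact agrees_unique ht hlam hobs hx hx' h h'

theorem XLam_finite (hfin : ∀ j, (Xset t A C lam Y s q j).Finite) (L : Finset (Fin r)) :
    (XLam t A C lam Y s q L).Finite := by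
  refine ((Set.Finite.pi fun j : L => hfin j).image fun v => ∑ j, v j).subset ?_
  rintro _ ⟨v, hv, -, rfl⟩
  exact ⟨fun j => v j, fun j _ => hv j j.2, Finset.sum_coe_sort L v⟩

theorem sSup_dotProduct_XLam_le (hfin : ∀ j, (Xset t A C lam Y s q j).Finite)
    {L : Finset (Fin r)} (hne : (XLam t A C lam Y s q L).Nonempty) (κ : Fin n → ℝ) :
    sSup ((fun xL => κ ⬝ᵥ xL) '' XLam t A C lam Y s q L)
      ≤ ∑ j ∈ L, sSup ((fun xj => κ ⬝ᵥ xj) '' Xset t A C lam Y s q j) := by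
  refine csSup_le (hne.image _) ?_
  rintro _ ⟨_, ⟨v, hv, -, rfl⟩, rfl⟩
  change κ ⬝ᵥ ∑ j ∈ L, v j ≤ _
  rw [dotProduct_sum]
  exact Finset.sum_le_sum fun j hj => (hfin j).le_csSup_image (κ ⬝ᵥ ·) (hv j hj)

end

theorem partial_combination_bound_general
    {n p r s q t : ℕ} (hsq : s ≤ q) (ht : n - 1 ≤ t)
    (A : Matrix (Fin n) (Fin n) ℝ) (C : Matrix (Fin p) (Fin n) ℝ)
    (lam : Fin r → ℝ) (hlam : Function.Injective lam)
    (P : Fin r → Matrix (Fin n) (Fin n) ℝ)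
    (hPmem : ∀ j, ∀ x : Fin n → ℝ, (P j).mulVec x ∈ genEig A (lam j))
    (hPsum : ∀ x : Fin n → ℝ, ∑ j, (P j).mulVec x = x)
    (Y : Fin p → Fin (t + 1) → ℝ) (xtrue : Fin n → ℝ)
    (ΛA : Finset (Fin p)) (hΛA : ΛA.card ≤ s)
    (hdata : ∀ i ∉ ΛA, Y i = obsMap t A C i xtrue)
    (hqobs : ∀ j, q + 1 ≤ {i : Fin p | eigObs A C (lam j) i}.ncard)
    (L : Finset (Fin r)) :
    ((XLam t A C lam Y s q L).Finite ∧ (XLam t A C lam Y s q L).Nonempty) ∧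
    (∀ j, (Xset t A C lam Y s q j).Finite ∧ (Xset t A C lam Y s q j).Nonempty) ∧
    (∀ κ : Fin n → ℝ, ∀ x : Fin n → ℝ, plausible t A C s Y x →
      κ ⬝ᵥ x ≤ (∑ j ∈ Lᶜ, sSup ((fun xj => κ ⬝ᵥ xj) '' Xset t A C lam Y s q j))
            + sSup ((fun xL => κ ⬝ᵥ xL) '' XLam t A C lam Y s q L) ∧
      (∑ j ∈ Lᶜ, sSup ((fun xj => κ ⬝ᵥ xj) '' Xset t A C lam Y s q j))
            + sSup ((fun xL => κ ⬝ᵥ xL) '' XLam t A C lam Y s q L)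
        ≤ ∑ j, sSup ((fun xj => κ ⬝ᵥ xj) '' Xset t A C lam Y s q j)) := by
  have hXfin := Xset_finite (A := A) (C := C) (Y := Y) ht hlam hsq
  have hXLfin := XLam_finite hXfin L
  have hfit_true : ∀ i ∉ ΛA, obsMap t A C i xtrue = Y i := fun i hi => (hdata i hi).symm
  have htrueXL := sum_proj_mem_XLam hPmem hPsum hqobs hΛA hfit_true L
  refine ⟨⟨hXLfin, _, htrueXL⟩,
    fun j => ⟨hXfin j, _, proj_mem_Xset hPmem hPsum (hqobs j) hΛA hfit_true⟩,
    fun κ x ⟨Γ, hΓ, hfit⟩ => ⟨?_, ?_⟩⟩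
  · have hΓc : Γᶜ.card ≤ s := by rw [Finset.card_compl, hΓ, Fintype.card_fin]; omega
    have hfitΓ : ∀ i ∉ Γᶜ, obsMap t A C i x = Y i := fun i hi => hfit i (by simpa using hi)
    calc κ ⬝ᵥ x = ∑ j ∈ Lᶜ, κ ⬝ᵥ (P j *ᵥ x) + κ ⬝ᵥ ∑ j ∈ L, P j *ᵥ x := by
          rw [dotProduct_sum, Finset.sum_compl_add_sum, ← dotProduct_sum, hPsum]
      _ ≤ _ := add_le_add
          (Finset.sum_le_sum fun j _ => (hXfin j).le_csSup_image (κ ⬝ᵥ ·)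
            (proj_mem_Xset hPmem hPsum (hqobs j) hΓc hfitΓ))
          (hXLfin.le_csSup_image (κ ⬝ᵥ ·) (sum_proj_mem_XLam hPmem hPsum hqobs hΓc hfitΓ L))
  · rw [← Finset.sum_compl_add_sum L]
    exact add_le_add_right (sSup_dotProduct_XLam_le hXfin ⟨_, htrueXL⟩ κ) _

/-- Proposition 3: the partial-combination bound is sandwiched between
the exact maximum over plausible states and the fully decomposed bound. -/
theorem partial_combination_bound
    {n p r s q t : ℕ} (hsp : s ≤ p) (hsq : s ≤ q) (hq2s : q ≤ 2 * s) (ht : n - 1 ≤ t)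
    (A : Matrix (Fin n) (Fin n) ℝ) (C : Matrix (Fin p) (Fin n) ℝ)
    (lam : Fin r → ℝ) (hlam : Function.Injective lam)
    (heig : ∀ j, ∃ w : Fin n → ℝ, w ≠ 0 ∧ A.mulVec w = lam j • w)
    (P : Fin r → Matrix (Fin n) (Fin n) ℝ)
    (hPmem : ∀ j, ∀ x : Fin n → ℝ, (P j).mulVec x ∈ genEig A (lam j))
    (hPsum : ∀ x : Fin n → ℝ, ∑ j, (P j).mulVec x = x)
    (Y : Fin p → Fin (t + 1) → ℝ) (xtrue : Fin n → ℝ)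
    (ΛA : Finset (Fin p)) (hΛA : ΛA.card ≤ s)
    (hdata : ∀ i ∉ ΛA, Y i = obsMap t A C i xtrue)
    (hqobs : ∀ j, q + 1 ≤ {i : Fin p | eigObs A C (lam j) i}.ncard)
    (L : Finset (Fin r)) :
    ((XLam t A C lam Y s q L).Finite ∧ (XLam t A C lam Y s q L).Nonempty) ∧
    (∀ j, (Xset t A C lam Y s q j).Finite ∧ (Xset t A C lam Y s q j).Nonempty) ∧
    (∀ κ : Fin n → ℝ, ∀ x : Fin n → ℝ, plausible t A C s Y x →
      κ ⬝ᵥ x ≤ (∑ j ∈ Lᶜ, sSup ((fun xj => κ ⬝ᵥ xj) '' Xset t A C lam Y s q j))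
            + sSup ((fun xL => κ ⬝ᵥ xL) '' XLam t A C lam Y s q L) ∧
      (∑ j ∈ Lᶜ, sSup ((fun xj => κ ⬝ᵥ xj) '' Xset t A C lam Y s q j))
            + sSup ((fun xL => κ ⬝ᵥ xL) '' XLam t A C lam Y s q L)
        ≤ ∑ j, sSup ((fun xj => κ ⬝ᵥ xj) '' Xset t A C lam Y s q j)) :=
  partial_combination_bound_general hsq ht A C lam hlam P hPmem hPsum Y xtrue ΛA hΛA hdata hqobs L
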